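/- arXiv:0704.1969 — 6 statements merged into one kernel-verified Lean document; each statement's English description precedes it below -/
import Mathlib

section
/- Let u be a snakeshape of size n, and let P_u be the poset on the n cells of u generated by the relations: the bottom-row cells of u (the bottom cells of the height-2 columns and the cells of the height-1 columns), read from right to left, form a chain of P_u with the rightmost cell lowest; and for each height-2 column, the top cell of that column lies strictly below the bottom cell of that column in P_u. Then the number of standard Young-Fibonacci tableaux of shape u equals n! divided by the product, over all cells c of u, of the number of cells c′ with c′ ≤ c in P_u. -/
/-- A snakeshape: a composition all of whose parts equal 1 or 2, recorded as the
list of column heights, read left to right. -/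
def IsSnakeshape (u : List ℕ) : Prop := ∀ p ∈ u, p = 1 ∨ p = 2

/-- The shape (list of column heights, left to right) of a tableau given as a
list of columns, each column listed top to bottom. -/
def shapeOf (t : List (List ℕ)) : List ℕ := t.map List.length

/-- `t` is a standard Young–Fibonacci tableau of size `n`: columns are listed left
to right, each column top to bottom; every column has height 1 or 2; in each
column the top entry exceeds the bottom entry; every topmost entry exceeds all
entries in columns strictly to its right; and the entries are exactly `1,…,n`. -/
def IsYFT (n : ℕ) (t : List (List ℕ)) : Prop :=
  (∀ c ∈ t, c.length = 1 ∨ c.length = 2) ∧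
  (∀ c ∈ t, List.Chain' (fun a b => b < a) c) ∧
  (∀ i j : ℕ, i < j → j < t.length →
    ∀ a ∈ (t.getD i []).head?, ∀ x ∈ t.getD j [], x < a) ∧
  (t.flatten).Perm (List.range' 1 n)

/-- Auxiliary, fuelled version of the Young–Fibonacci insertion: reading the word
from right to left, each letter read gets matched to the largest not-yet-matched
letter occurring strictly to its left which exceeds it (forming a height-2 column,
larger letter on top), and otherwise stays single (a height-1 column); columns are
listed in the order in which their status was settled. -/
def insertColsAux : ℕ → List ℕ → List (List ℕ)
  | 0, _ => []
  | _, [] => []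
  | fuel+1, w =>
    let x := w.getLast!
    let w' := w.dropLast
    match (w'.filter (fun y => decide (x < y))).max? with
    | none => [x] :: insertColsAux fuel w'
    | some m => [m, x] :: insertColsAux fuel (w'.erase m)

/-- The Young–Fibonacci insertion tableau of a word. -/
def insertCols (w : List ℕ) : List (List ℕ) := insertColsAux w.length w

/-- The word `σ(1)⋯σ(n)` of a permutation of `{1,…,n}` (letters `1,…,n`). -/
def permWord {n : ℕ} (σ : Equiv.Perm (Fin n)) : List ℕ :=
  List.ofFn (fun i => (σ i : ℕ) + 1)

/-- min(t): read the columns right to left, each column top to bottom. -/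
def minWord (t : List (List ℕ)) : List ℕ := t.reverse.flatten

/-- max(t): the top row left to right, then the bottom row right to left. -/
def maxWord (t : List (List ℕ)) : List ℕ :=
  (t.filterMap fun c => if c.length = 2 then c.head? else none) ++
    (t.filterMap List.getLast?).reverse

/-- Number of inversions of a word: pairs of positions `p < q` with `w p > w q`. -/
def invCount (w : List ℕ) : ℕ :=
  ((Finset.range w.length ×ˢ Finset.range w.length).filter
    (fun p => p.1 < p.2 ∧ w.getD p.2 0 < w.getD p.1 0)).card

/-- `w'` is obtained from `w` by swapping two adjacent letters `x < y` (in this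
order in `w`), thus creating exactly one more inversion. -/
def AdjSwap (w w' : List ℕ) : Prop :=
  ∃ l r : List ℕ, ∃ x y : ℕ, x < y ∧ w = l ++ x :: y :: r ∧ w' = l ++ y :: x :: r

/-- The (right) weak order on words. -/
def WordWeakLe (w w' : List ℕ) : Prop := Relation.ReflTransGen AdjSwap w w'

/-- `Shift t t'`: `t'` is obtained from `t` by shifting one entry. Columns are
listed top to bottom, so `[b, a]` is the column with top `b`, bottom `a`. -/
inductive Shift : List (List ℕ) → List (List ℕ) → Prop
  /-- the bottom entry `a` of a height-2 column bumps up the single entry `c` of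
  the column on its left; the top entry `b` falls down. -/
  | bump2 (l r : List (List ℕ)) (c b a : ℕ) :
      Shift (l ++ [[c], [b, a]] ++ r) (l ++ [[c, a], [b]] ++ r)
  /-- the entry `a` of a height-1 column bumps up the single entry `c` of the
  column on its left; its own column disappears. -/
  | bump1 (l r : List (List ℕ)) (c a : ℕ) :
      Shift (l ++ [[c], [a]] ++ r) (l ++ [[c, a]] ++ r)
  /-- `a < c` replaces `c` at the bottom of the height-2 column on its left, and
  `c < b` takes the former place of `a`. -/
  | exch (l r : List (List ℕ)) (d c b a : ℕ) (h1 : a < c) (h2 : c < b) :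
      Shift (l ++ [[d, c], [b, a]] ++ r) (l ++ [[d, a], [b, c]] ++ r)
  /-- `a < c` replaces `c` at the bottom of the height-2 column on its left; since
  `b < c`, `c` becomes a new height-1 column in between and `b` falls down. -/
  | split2 (l r : List (List ℕ)) (d c b a : ℕ) (h1 : a < c) (h2 : b < c) :
      Shift (l ++ [[d, c], [b, a]] ++ r) (l ++ [[d, a], [c], [b]] ++ r)
  /-- `a < c` replaces `c` at the bottom of the height-2 column on its left; `c`
  becomes a new height-1 column and the height-1 column of `a` disappears. -/
  | split1 (l r : List (List ℕ)) (d c a : ℕ) (h1 : a < c) :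
      Shift (l ++ [[d, c], [a]] ++ r) (l ++ [[d, a], [c]] ++ r)

/-- The bottom row of a tableau, read left to right: the bottom entries of the
height-2 columns together with the entries of the height-1 columns. -/
def bottomRow (t : List (List ℕ)) : List ℕ := t.filterMap List.getLast?

/-- Generating relations of the canonical poset `P_t`: `canoGen t x y` means `x`
is covered... i.e. `x <_P y` is a generating relation: consecutive bottom-row
entries read right to left (rightmost lowest), and each top entry of a height-2
column below the corresponding bottom entry. -/
def canoGen (t : List (List ℕ)) (x y : ℕ) : Prop :=
  (∃ i : ℕ, i + 1 < (bottomRow t).length ∧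
    (bottomRow t).getD (i + 1) 0 = x ∧ (bottomRow t).getD i 0 = y) ∨
  (∃ c ∈ t, c.length = 2 ∧ c.head? = some x ∧ c.getLast? = some y)

/-- `w` is (the word of) a linear extension of the canonical poset `P_t`. -/
def IsLinExt (t : List (List ℕ)) (w : List ℕ) : Prop :=
  ∀ x y : ℕ, Relation.ReflTransGen (canoGen t) x y → x ≠ y →
    w.idxOf x < w.idxOf y

/-- The set of inversions of a word: pairs `(j, i)` with `i < j` such that `j`
occurs before `i`. -/
def InvSet (w : List ℕ) : Set (ℕ × ℕ) :=
  {p | p.2 < p.1 ∧ p.1 ∈ w ∧ p.2 ∈ w ∧ w.idxOf p.1 < w.idxOf p.2}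

/-- The set of non-inversions of a word: pairs `(i, j)` with `i < j` such that `i`
occurs before `j`. -/
def NonInvSet (w : List ℕ) : Set (ℕ × ℕ) :=
  {p | p.1 < p.2 ∧ p.1 ∈ w ∧ p.2 ∈ w ∧ w.idxOf p.1 < w.idxOf p.2}

/-- The row canonical tableau of shape `u` (size `n`): topmost cells are labelled
`n, n-1, …` from left to right, bottom cells of height-2 columns are labelled
`1, 2, …` from left to right. -/
def rTcols (n : ℕ) (u : List ℕ) : List (List ℕ) :=
  (List.range u.length).map (fun i =>
    if u.getD i 0 = 2 then [n - i, (u.take i).count 2 + 1] else [n - i])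

/-- The column canonical tableau of shape `u`: cells are labelled `1, 2, …` taking
columns right to left, in each column the bottom cell before the top cell. -/
def cTcols (u : List ℕ) : List (List ℕ) :=
  (List.range u.length).map (fun i =>
    let s := u.sum - (u.take (i + 1)).sum
    if u.getD i 0 = 2 then [s + 2, s + 1] else [s + 1])

/-- `t` is a semistandard Young–Fibonacci tableau of shape `u`: entries are
positive integers, in each column the top entry strictly exceeds the bottom one,
and every topmost entry is `≥` all entries in columns strictly to its right. -/
def IsSSYFT (u : List ℕ) (t : List (List ℕ)) : Prop :=
  shapeOf t = u ∧
  (∀ c ∈ t, List.Chain' (fun a b => b < a) c) ∧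
  (∀ i j : ℕ, i < j → j < t.length →
    ∀ a ∈ (t.getD i []).head?, ∀ x ∈ t.getD j [], x ≤ a) ∧
  (∀ x ∈ t.flatten, 1 ≤ x)

/-- `t` has content `v`: for each `i`, `t` has exactly `v_i` entries equal to `i`.-/
def ContentIs (v : List ℕ) (t : List (List ℕ)) : Prop :=
  ∀ i : ℕ, t.flatten.count (i + 1) = v.getD i 0

/-- The Young–Fibonacci number `N_{u,v}`: the number of semistandard
Young–Fibonacci tableaux of shape `u` and content `v`. -/
noncomputable def YFNumber (u v : List ℕ) : ℕ :=
  Nat.card {t : List (List ℕ) // IsSSYFT u t ∧ ContentIs v t}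

/-- The multiset (as a list indexed by positions) `v^{1-}`: delete a part equal
to 1, or decrease a larger part by 1. -/
def vMinus (v : List ℕ) : List (List ℕ) :=
  (List.range v.length).map (fun p =>
    if v.getD p 0 = 1 then v.eraseIdx p else v.set p (v.getD p 0 - 1))

/-- The list of snakeshapes covering `u` in the Young–Fibonacci lattice:
(i) prepend a part 1; (ii) replace the leftmost part equal to 1 by a 2;
(iii) if `u` starts with `k ≥ 1` parts equal to 2, insert a part 1 just after the
`i`-th part, `1 ≤ i ≤ k`. -/
def coversList (u : List ℕ) : List (List ℕ) :=
  [1 :: u] ++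
    (if (u.takeWhile (fun p => decide (p = 2))).length < u.length then
      [u.take (u.takeWhile (fun p => decide (p = 2))).length ++
        2 :: u.drop ((u.takeWhile (fun p => decide (p = 2))).length + 1)]
    else []) ++
    ((List.range (u.takeWhile (fun p => decide (p = 2))).length).map
      (fun i => u.insertIdx (i + 1) 1))

/-- Okada's analogue of the Kostka numbers (fuelled implementation of the
defining recurrences; `v.length` is enough fuel). -/
def OkadaKAux : ℕ → List ℕ → List ℕ → ℕ
  | _, [], [] => 1
  | fuel+1, 1 :: u, 1 :: v => OkadaKAux fuel u v
  | fuel+1, 2 :: u, 2 :: v => OkadaKAux fuel u v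
  | _+1, 1 :: _, 2 :: _ => 0
  | fuel+1, 2 :: u, 1 :: v => ((coversList u).map (fun w => OkadaKAux fuel w v)).sum
  | _, _, _ => 0

/-- Okada's analogue `K_{u,v}` of the Kostka numbers, determined by
`K_{∅,∅} = 1`, `K_{1u,1v} = K_{u,v}`, `K_{2u,2v} = K_{u,v}`, `K_{1u,2v} = 0` and
`K_{2u,1v} = Σ_{w covers u} K_{w,v}`. -/
def OkadaK (u v : List ℕ) : ℕ := OkadaKAux v.length u v

/-- The cells of a snakeshape `u`: pairs `(i, r)` with `i` the (0-based) column
index and `r = 0` for the bottom cell, `r = 1` for the top cell. -/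
def cellsFinset (u : List ℕ) : Finset (ℕ × ℕ) :=
  (Finset.range u.length ×ˢ Finset.range 2).filter (fun p => p.2 < u.getD p.1 0)

/-- Generating relations of the poset `P_u` on the cells of `u`: the bottom-row
cells read right to left form a chain (rightmost lowest), and the top cell of
each height-2 column lies strictly below its bottom cell. -/
def cellGen (u : List ℕ) (c c' : ℕ × ℕ) : Prop :=
  (∃ i : ℕ, i + 1 < u.length ∧ c = (i + 1, 0) ∧ c' = (i, 0)) ∨
  (∃ i : ℕ, i < u.length ∧ u.getD i 0 = 2 ∧ c = (i, 1) ∧ c' = (i, 0))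

/-- The order relation of the poset `P_u`. -/
def cellLe (u : List ℕ) (c c' : ℕ × ℕ) : Prop :=
  Relation.ReflTransGen (cellGen u) c c'

/-!
The top entry of the first column of a standard Young–Fibonacci tableau is its largest entry;
the other entry of that column, if there is one, is arbitrary, and the remaining columns form a
standard tableau on the entries left over. Working with tableaux on an arbitrary set of entries,
the number of tableaux of shape `p :: u` is therefore `1` or `|u| + 1` times the number for `u`,
as `p = 1` or `p = 2`, which telescopes to `n! / ∏ᵢ (uᵢ + uᵢ₊₁ + ⋯)`. On the other side, the
cells below the bottom cell of column `i` in `P_u` are exactly the cells of columns `≥ i`, and a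
top cell lies above no other cell, so the product of the down-set sizes is `∏ᵢ (uᵢ + uᵢ₊₁ + ⋯)`.
-/

theorem Finset.cons_eq_val_iff {α : Type*} [DecidableEq α] {S : Finset α} {a : α}
    {m : Multiset α} : a ::ₘ m = S.val ↔ a ∈ S ∧ m = (S.erase a).val := by
  constructor
  · intro h
    have ha : a ∈ S := by rw [← Finset.mem_val, ← h]; exact Multiset.mem_cons_self a m
    exact ⟨ha, by rw [Finset.erase_val, ← h, Multiset.erase_cons_head]⟩
  · rintro ⟨ha, rfl⟩
    rw [Finset.erase_val, Multiset.cons_erase ha]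

theorem Finset.isGreatest_iff_forall_mem_erase_lt {α : Type*} [LinearOrder α] {S : Finset α}
    {a : α} (ha : a ∈ S) : IsGreatest (S : Set α) a ↔ ∀ x ∈ S.erase a, x < a := by
  simp only [IsGreatest, upperBounds, Finset.mem_coe, ha, true_and,
    Finset.mem_erase, and_imp]
  exact ⟨fun h x hxa hx => lt_of_le_of_ne (h hx) hxa,
    fun h x hx => (eq_or_ne x a).elim le_of_eq fun hxa => (h x hxa hx).le⟩

theorem List.sum_drop_eq_sum_Ico {M : Type*} [AddCommMonoid M] (l : List M) (i : ℕ) :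
    (l.drop i).sum = ∑ j ∈ Finset.Ico i l.length, l.getD j 0 := by
  induction l generalizing i with
  | nil => simp
  | cons a l ih =>
    have hshift (k : ℕ) : ∑ j ∈ Finset.Ico (k + 1) (l.length + 1), (a :: l).getD j 0 =
        (l.drop k).sum := by
      rw [ih, ← Finset.sum_Ico_add']
      rfl
    cases i with
    | zero =>
      rw [List.length_cons, Finset.sum_eq_sum_Ico_succ_bot (Nat.succ_pos _), hshift]
      rfl
    | succ i => exact (hshift i).symm

def prodTailSums (u : List ℕ) : ℕ := ∏ i ∈ Finset.range u.length, (u.drop i).sum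

theorem prodTailSums_cons (p : ℕ) (u : List ℕ) :
    prodTailSums (p :: u) = (p + u.sum) * prodTailSums u := by
  simp only [prodTailSums, List.length_cons, Finset.prod_range_succ', List.drop_succ_cons,
    List.drop_zero, List.sum_cons, mul_comm]

def IsYFTLike (t : List (List ℕ)) : Prop :=
  (∀ c ∈ t, c.length = 1 ∨ c.length = 2) ∧
  (∀ c ∈ t, c.IsChain (fun a b => b < a)) ∧
  t.Pairwise (fun c d => ∀ a ∈ c.head?, ∀ x ∈ d, x < a)

/-- `IsYFT` with the entries running over `S` rather than `1, …, n`: removing the first column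
of such a tableau leaves one of the same kind, with no relabelling. -/
def IsYFTOn (S : Finset ℕ) (t : List (List ℕ)) : Prop :=
  IsYFTLike t ∧ (t.flatten : Multiset ℕ) = S.val

theorem isYFT_iff_isYFTOn_Icc {n : ℕ} {t : List (List ℕ)} :
    IsYFT n t ↔ IsYFTOn (Finset.Icc 1 n) t := by
  simp only [IsYFT, IsYFTOn, IsYFTLike, and_assoc]
  refine and_congr Iff.rfl (and_congr Iff.rfl (and_congr ?_ Multiset.coe_eq_coe.symm))
  rw [List.pairwise_iff_getElem]
  constructor
  · intro h i j hi hj hij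
    simpa only [List.getD_eq_getElem _ _ hi, List.getD_eq_getElem _ _ hj] using h i j hij hj
  · intro h i j hij hj
    simpa only [List.getD_eq_getElem _ _ (hij.trans hj), List.getD_eq_getElem _ _ hj] using
      h i j (hij.trans hj) hj hij

theorem isYFTLike_cons_iff {c : List ℕ} {s : List (List ℕ)} :
    IsYFTLike (c :: s) ↔ (c.length = 1 ∨ c.length = 2) ∧ c.IsChain (fun a b => b < a) ∧
      (∀ a ∈ c.head?, ∀ x ∈ s.flatten, x < a) ∧ IsYFTLike s := by
  simp only [IsYFTLike, List.forall_mem_cons, List.pairwise_cons, List.mem_flatten]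
  constructor
  · rintro ⟨⟨hlen, hlens⟩, ⟨hc, hcs⟩, hhead, hpw⟩
    exact ⟨hlen, hc, fun a ha x ⟨d, hd, hx⟩ => hhead d hd a ha x hx, hlens, hcs, hpw⟩
  · rintro ⟨hlen, hc, hhead, hlens, hcs, hpw⟩
    exact ⟨⟨hlen, hlens⟩, ⟨hc, hcs⟩, fun d hd a ha x hx => hhead a ha x ⟨d, hd, hx⟩, hpw⟩

theorem isYFTOn_singleton_cons_iff {S : Finset ℕ} {a : ℕ} {s : List (List ℕ)} :
    IsYFTOn S ([a] :: s) ↔ IsGreatest (S : Set ℕ) a ∧ IsYFTOn (S.erase a) s := by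
  rw [IsYFTOn, IsYFTOn, isYFTLike_cons_iff, List.flatten_cons, List.singleton_append,
    ← Multiset.cons_coe, Finset.cons_eq_val_iff]
  simp only [List.length_singleton, true_or, List.isChain_singleton, List.head?_cons,
    Option.mem_def, Option.some.injEq, forall_eq', true_and]
  constructor
  · rintro ⟨⟨hlt, hs⟩, ha, hval⟩
    refine ⟨(Finset.isGreatest_iff_forall_mem_erase_lt ha).2 fun x hx => hlt x ?_, hs, hval⟩
    rwa [← Multiset.mem_coe, hval]
  · rintro ⟨hgr, hs, hval⟩
    refine ⟨⟨fun x hx => (Finset.isGreatest_iff_forall_mem_erase_lt hgr.1).1 hgr x ?_, hs⟩,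
      hgr.1, hval⟩
    rwa [← Multiset.mem_coe, hval] at hx

theorem isYFTOn_pair_cons_iff {S : Finset ℕ} {a b : ℕ} {s : List (List ℕ)} :
    IsYFTOn S ([a, b] :: s) ↔
      IsGreatest (S : Set ℕ) a ∧ b ∈ S.erase a ∧ IsYFTOn ((S.erase a).erase b) s := by
  rw [IsYFTOn, IsYFTOn, isYFTLike_cons_iff, List.flatten_cons, List.cons_append,
    List.singleton_append, ← Multiset.cons_coe, ← Multiset.cons_coe, Finset.cons_eq_val_iff,
    Finset.cons_eq_val_iff]
  simp only [List.length_cons, List.length_nil, List.isChain_pair, List.head?_cons,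
    Option.mem_def, Option.some.injEq, forall_eq', or_true, true_and]
  constructor
  · rintro ⟨⟨hba, hlt, hs⟩, ha, hb, hval⟩
    refine ⟨(Finset.isGreatest_iff_forall_mem_erase_lt ha).2 ?_, hb, hs, hval⟩
    rw [← Finset.insert_erase hb, Finset.forall_mem_insert]
    exact ⟨hba, fun x hx => hlt x (by rwa [← Multiset.mem_coe, hval])⟩
  · rintro ⟨hgr, hb, hs, hval⟩
    have hlt := (Finset.isGreatest_iff_forall_mem_erase_lt hgr.1).1 hgr
    refine ⟨⟨hlt b hb, fun x hx => hlt x ?_, hs⟩, hgr.1, hb, hval⟩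
    rw [← Multiset.mem_coe, hval] at hx
    exact Finset.mem_of_mem_erase hx

def yftOn (S : Finset ℕ) (u : List ℕ) : Set (List (List ℕ)) :=
  {t | IsYFTOn S t ∧ shapeOf t = u}

theorem shapeOf_eq_cons_iff {t : List (List ℕ)} {p : ℕ} {u : List ℕ} :
    shapeOf t = p :: u ↔ ∃ c s, t = c :: s ∧ c.length = p ∧ shapeOf s = u := by
  simp only [shapeOf, List.map_eq_cons_iff]

theorem yftOn_empty_nil : yftOn ∅ [] = {[]} := by
  ext t
  simp only [yftOn, Set.mem_singleton_iff, shapeOf, List.map_eq_nil_iff]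
  constructor
  · exact And.right
  · rintro rfl
    exact ⟨⟨⟨by simp, by simp, List.Pairwise.nil⟩, rfl⟩, rfl⟩

theorem yftOn_one_cons {S : Finset ℕ} (hS : S.Nonempty) (u : List ℕ) :
    yftOn S (1 :: u) = List.cons [S.max' hS] '' yftOn (S.erase (S.max' hS)) u := by
  ext t
  simp only [yftOn, Set.mem_image]
  constructor
  · rintro ⟨ht, hsh⟩
    obtain ⟨c, s, rfl, hc, hs⟩ := shapeOf_eq_cons_iff.1 hsh
    obtain ⟨a, rfl⟩ := List.length_eq_one_iff.1 hc
    obtain ⟨hgr, hs'⟩ := isYFTOn_singleton_cons_iff.1 ht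
    obtain rfl := hgr.unique (S.isGreatest_max' hS)
    exact ⟨s, ⟨hs', hs⟩, rfl⟩
  · rintro ⟨s, ⟨hs, hsh⟩, rfl⟩
    exact ⟨isYFTOn_singleton_cons_iff.2 ⟨S.isGreatest_max' hS, hs⟩, by simp [shapeOf, ← hsh]⟩

theorem card_yftOn_two_cons {S : Finset ℕ} (hS : S.Nonempty) (u : List ℕ) :
    Nat.card (yftOn S (2 :: u)) =
      Nat.card (Σ b : S.erase (S.max' hS), yftOn ((S.erase (S.max' hS)).erase b) u) := by
  set m := S.max' hS
  have hm : IsGreatest (S : Set ℕ) m := S.isGreatest_max' hS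
  have hmem (p : Σ b : S.erase m, yftOn ((S.erase m).erase b) u) :
      [m, p.1] :: p.2 ∈ yftOn S (2 :: u) :=
    ⟨isYFTOn_pair_cons_iff.2 ⟨hm, p.1.2, p.2.2.1⟩, by simp [shapeOf, ← p.2.2.2]⟩
  refine (Nat.card_congr (Equiv.ofBijective (fun p => ⟨_, hmem p⟩) ⟨?_, ?_⟩)).symm
  · rintro ⟨⟨b, hb⟩, ⟨s, hs⟩⟩ ⟨⟨b', hb'⟩, ⟨s', hs'⟩⟩ h
    simp only [Subtype.mk.injEq, List.cons.injEq, true_and, and_true] at h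
    obtain ⟨rfl, rfl⟩ := h
    rfl
  · rintro ⟨t, ht, hsh⟩
    obtain ⟨c, s, rfl, hc, hs⟩ := shapeOf_eq_cons_iff.1 hsh
    obtain ⟨a, b, rfl⟩ := List.length_eq_two.1 hc
    obtain ⟨hgr, hb, hs'⟩ := isYFTOn_pair_cons_iff.1 ht
    obtain rfl := hgr.unique hm
    exact ⟨⟨⟨b, hb⟩, ⟨s, hs', hs⟩⟩, rfl⟩

theorem card_yftOn_mul_prodTailSums {u : List ℕ} (hu : IsSnakeshape u) {S : Finset ℕ}
    (hS : S.card = u.sum) : Nat.card (yftOn S u) * prodTailSums u = u.sum.factorial := by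
  induction u generalizing S with
  | nil =>
    rw [Finset.card_eq_zero.1 hS, yftOn_empty_nil]
    simp [prodTailSums]
  | cons p u ih =>
    have hu' : IsSnakeshape u := fun q hq => hu q (List.mem_cons_of_mem p hq)
    have hS0 : S.Nonempty := Finset.card_pos.1 <| by
      rcases hu p List.mem_cons_self with rfl | rfl <;> simp [hS]
    have hcard : (S.erase (S.max' hS0)).card + 1 = p + u.sum := by
      rw [Finset.card_erase_add_one (S.max'_mem hS0), hS, List.sum_cons]
    rw [prodTailSums_cons, List.sum_cons]
    rcases hu p List.mem_cons_self with rfl | rfl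
    · rw [yftOn_one_cons hS0, Nat.card_image_of_injective List.cons_injective,
        mul_left_comm, ih hu' (by omega), add_comm, Nat.factorial_succ]
    · have hfib (b : S.erase (S.max' hS0)) :
          Nat.card (yftOn ((S.erase (S.max' hS0)).erase b) u) * prodTailSums u =
            u.sum.factorial :=
        ih hu' (by rw [Finset.card_erase_of_mem b.2]; omega)
      have (b : S.erase (S.max' hS0)) : Finite (yftOn ((S.erase (S.max' hS0)).erase b) u) :=
        Nat.finite_of_card_ne_zero (left_ne_zero_of_mul (by rw [hfib b]; positivity))
      rw [card_yftOn_two_cons hS0, Nat.card_sigma, mul_left_comm, Finset.sum_mul,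
        Finset.sum_congr rfl fun b _ => hfib b, Finset.sum_const, Finset.card_univ,
        Fintype.card_coe, smul_eq_mul, show (S.erase (S.max' hS0)).card = u.sum + 1 by omega,
        show 2 + u.sum = u.sum + 1 + 1 by omega, Nat.factorial_succ, Nat.factorial_succ]

theorem IsSnakeshape.getD_eq {u : List ℕ} (hu : IsSnakeshape u) {j : ℕ} (hj : j < u.length) :
    u.getD j 0 = 1 ∨ u.getD j 0 = 2 :=
  List.getD_eq_getElem u 0 hj ▸ hu _ (List.getElem_mem hj)

theorem mem_cellsFinset {u : List ℕ} {c : ℕ × ℕ} :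
    c ∈ cellsFinset u ↔ c.1 < u.length ∧ c.2 < 2 ∧ c.2 < u.getD c.1 0 := by
  simp [cellsFinset, and_assoc]

theorem eq_or_le_of_cellLe {u : List ℕ} {c c' : ℕ × ℕ} (h : cellLe u c' c) :
    c' = c ∨ (c.2 = 0 ∧ c.1 ≤ c'.1) := by
  induction h with
  | refl => exact Or.inl rfl
  | tail _ hgen ih =>
    rcases hgen with ⟨i, -, rfl, rfl⟩ | ⟨i, -, -, rfl, rfl⟩
    · rcases ih with rfl | ⟨-, hi⟩
      · exact Or.inr ⟨rfl, Nat.le_succ i⟩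
      · exact Or.inr ⟨rfl, Nat.le_of_succ_le hi⟩
    · rcases ih with rfl | ⟨h0, -⟩
      · exact Or.inr ⟨rfl, le_rfl⟩
      · simp at h0

theorem cellLe_bottom_of_le {u : List ℕ} {i j : ℕ} (hij : i ≤ j) (hj : j < u.length) :
    cellLe u (j, 0) (i, 0) := by
  induction j, hij using Nat.le_induction with
  | base => exact Relation.ReflTransGen.refl
  | succ j _ ih => exact .head (Or.inl ⟨j, hj, rfl, rfl⟩) (ih (by omega))

theorem cellLe_bottom_of_mem {u : List ℕ} (hu : IsSnakeshape u) {i : ℕ} {c : ℕ × ℕ}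
    (hc : c ∈ cellsFinset u) (hi : i ≤ c.1) : cellLe u c (i, 0) := by
  obtain ⟨j, r⟩ := c
  rw [mem_cellsFinset] at hc
  obtain ⟨hj, hr, hru⟩ := hc
  have hbottom := cellLe_bottom_of_le (u := u) hi hj
  obtain rfl | rfl : r = 0 ∨ r = 1 := by omega
  · exact hbottom
  · have : u.getD j 0 = 2 := (hu.getD_eq hj).resolve_left (by omega)
    exact .head (Or.inr ⟨j, hj, this, rfl, rfl⟩) hbottom

theorem card_filter_le_fst_cellsFinset {u : List ℕ} (hu : IsSnakeshape u) (i : ℕ) :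
    ((cellsFinset u).filter (fun c => i ≤ c.1)).card = (u.drop i).sum := by
  have hfilter : (cellsFinset u).filter (fun c => i ≤ c.1) =
      (Finset.Ico i u.length ×ˢ Finset.range 2).filter (fun c => c.2 < u.getD c.1 0) := by
    ext c
    simp only [Finset.mem_filter, mem_cellsFinset, Finset.mem_product, Finset.mem_Ico,
      Finset.mem_range]
    tauto
  rw [hfilter, Finset.card_filter, Finset.sum_product, List.sum_drop_eq_sum_Ico]
  refine Finset.sum_congr rfl fun j hj => ?_
  have hj : j < u.length := (Finset.mem_Ico.1 hj).2
  have := hu.getD_eq hj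
  simp only [Finset.sum_range_succ, Finset.sum_range_zero, zero_add]
  split_ifs <;> omega

theorem card_downset_bottom {u : List ℕ} (hu : IsSnakeshape u) (i : ℕ) :
    Nat.card {c // c ∈ cellsFinset u ∧ cellLe u c (i, 0)} = (u.drop i).sum := by
  rw [← card_filter_le_fst_cellsFinset hu, ← Nat.card_eq_finsetCard]
  refine Nat.card_congr (Equiv.subtypeEquivRight fun c => ?_)
  rw [Finset.mem_filter]
  exact and_congr_right fun hc =>
    ⟨fun h => (eq_or_le_of_cellLe h).elim (fun h => h ▸ le_rfl) And.right,
      cellLe_bottom_of_mem hu hc⟩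

theorem card_downset_top {u : List ℕ} {i : ℕ} (hc : (i, 1) ∈ cellsFinset u) :
    Nat.card {c // c ∈ cellsFinset u ∧ cellLe u c (i, 1)} = 1 :=
  Nat.card_eq_one_iff_exists.2 ⟨⟨_, hc, .refl⟩, fun ⟨c, _, h⟩ =>
    Subtype.ext ((eq_or_le_of_cellLe h).resolve_right (by simp))⟩

theorem prod_card_downset_eq_prodTailSums {u : List ℕ} (hu : IsSnakeshape u) :
    ∏ c ∈ cellsFinset u, Nat.card {c' // c' ∈ cellsFinset u ∧ cellLe u c' c} =
      prodTailSums u := by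
  have hprod (f : ℕ × ℕ → ℕ) : ∏ c ∈ cellsFinset u, f c = ∏ j ∈ Finset.range u.length,
      ∏ r ∈ Finset.range 2, if r < u.getD j 0 then f (j, r) else 1 := by
    rw [cellsFinset, Finset.prod_filter, Finset.prod_product]
  rw [hprod, prodTailSums]
  refine Finset.prod_congr rfl fun j hj => ?_
  have hj : j < u.length := Finset.mem_range.1 hj
  have hu0 : 0 < u.getD j 0 := by rcases hu.getD_eq hj with h | h <;> omega
  simp only [Finset.prod_range_succ, Finset.prod_range_zero, one_mul, if_pos hu0,
    card_downset_bottom hu]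
  split_ifs with h1
  · rw [card_downset_top (mem_cellsFinset.2 ⟨hj, one_lt_two, h1⟩), mul_one]
  · rw [mul_one]

/-- the number of standard Young–Fibonacci tableaux of shape `u` is
`n!` divided by the product over all cells `c` of `u` of the number of cells
`c' ≤ c` in the poset `P_u`. -/
theorem yft_count_hook_length_formula (n : ℕ) (u : List ℕ)
    (hu : IsSnakeshape u) (hsum : u.sum = n) :
    Nat.card {t : List (List ℕ) // IsYFT n t ∧ shapeOf t = u} =
      n.factorial /
        ∏ c ∈ cellsFinset u,
          Nat.card {c' : ℕ × ℕ // c' ∈ cellsFinset u ∧ cellLe u c' c} := by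
  subst hsum
  have hcount : Nat.card (yftOn (Finset.Icc 1 u.sum) u) * prodTailSums u = u.sum.factorial :=
    card_yftOn_mul_prodTailSums hu (by simp)
  rw [Nat.card_congr (Equiv.subtypeEquivRight fun t => and_congr_left' isYFT_iff_isYFTOn_Icc),
    prod_card_downset_eq_prodTailSums hu]
  exact Nat.eq_div_of_mul_eq_left (right_ne_zero_of_mul (hcount ▸ u.sum.factorial_ne_zero)) hcount
end

section
/- For every permutation σ of {1,…,n}, the Young-Fibonacci insertion tableau of the inverse permutation equals the recording tableau of σ, that is, P(σ⁻¹) = Q(σ). -/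
/-- Sorting a two-element list into decreasing order. -/
def sortDesc : List ℕ → List ℕ
  | [a, b] => if b ≤ a then [a, b] else [b, a]
  | c => c

/-- The recording tableau `Q(σ)`: its `i`-th column contains the positions in `σ`
of the letters of the `i`-th column of `P(σ)`, larger position on top. -/
def Qcols {n : ℕ} (σ : Equiv.Perm (Fin n)) : List (List ℕ) :=
  (insertCols (permWord σ)).map
    (fun c => sortDesc (c.map (fun v => (permWord σ).idxOf v + 1)))

/-!
Encode `σ` by its points `(i, σ i)`: listed by position their second coordinates spell the
word of `σ`, listed by value their first coordinates spell the word of `σ⁻¹`. Insertion is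
driven by the last letter. Let `(P, x)` be the last point by position and `(Q, M)` the last one
by value. If they coincide, both words end in their maximum, which forms a single column
(`x` for `σ`, its position `P` for `σ⁻¹`). Otherwise `x` is matched with the maximum `M`, and
symmetrically `Q` is matched with the maximum `P`: the column `[M, x]` of `P(σ)` has positions
`[P, Q]`, which is the column produced for `σ⁻¹`. Deleting the points involved and inducting
gives the theorem.
-/

lemma insertColsAux_nil (fuel : ℕ) : insertColsAux fuel [] = [] := by
  cases fuel <;> rfl

lemma insertColsAux_succ_concat (fuel : ℕ) (w : List ℕ) (x : ℕ) :
    insertColsAux (fuel + 1) (w ++ [x]) =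
      match (w.filter (x < ·)).max? with
      | none => [x] :: insertColsAux fuel w
      | some m => [m, x] :: insertColsAux fuel (w.erase m) := by
  rw [insertColsAux.eq_3 _ _ (by simp)]
  simp

lemma insertColsAux_eq_insertCols {fuel : ℕ} {w : List ℕ} (h : w.length ≤ fuel) :
    insertColsAux fuel w = insertCols w := by
  suffices key : ∀ fuel fuel' (w : List ℕ), w.length ≤ fuel → w.length ≤ fuel' →
      insertColsAux fuel w = insertColsAux fuel' w from key _ _ w h le_rfl
  intro fuel
  induction fuel with
  | zero =>
    intro fuel' w hw _
    rw [List.eq_nil_of_length_eq_zero (Nat.le_zero.1 hw), insertColsAux_nil, insertColsAux_nil]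
  | succ fuel ih =>
    intro fuel' w hw hw'
    rcases w.eq_nil_or_concat with rfl | ⟨w, x, rfl⟩
    · rw [insertColsAux_nil, insertColsAux_nil]
    obtain ⟨fuel', rfl⟩ : ∃ k, fuel' = k + 1 := ⟨fuel' - 1, by simp at hw'; omega⟩
    simp only [List.concat_eq_append, List.length_append, List.length_singleton,
      Nat.add_le_add_iff_right] at hw hw' ⊢
    rw [insertColsAux_succ_concat, insertColsAux_succ_concat]
    split
    · rw [ih _ _ hw hw']
    · next m _ =>
      have := (w.erase_sublist (a := m)).length_le
      rw [ih _ _ (this.trans hw) (this.trans hw')]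

lemma insertCols_concat_of_forall_le {w : List ℕ} {x : ℕ} (hx : ∀ y ∈ w, y ≤ x) :
    insertCols (w ++ [x]) = [x] :: insertCols w := by
  have hnone : w.filter (x < ·) = [] :=
    List.filter_eq_nil_iff.2 fun y hy => by simpa using hx y hy
  rw [insertCols, List.length_append, List.length_singleton, insertColsAux_succ_concat, hnone]
  rfl

lemma insertCols_middle_concat {u v : List ℕ} {m x : ℕ} (hxm : x < m)
    (hu : ∀ y ∈ u, y < m) (hv : ∀ y ∈ v, y ≤ m) :
    insertCols (u ++ m :: v ++ [x]) = [m, x] :: insertCols (u ++ v) := by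
  have hmax : ((u ++ m :: v).filter (x < ·)).max? = some m := by
    refine List.max?_eq_some_iff.2 ⟨by simp [hxm], fun y hy => ?_⟩
    simp only [List.mem_filter, List.mem_append, List.mem_cons] at hy
    rcases hy.1 with h | rfl | h
    exacts [(hu y h).le, le_rfl, hv y h]
  have herase : (u ++ m :: v).erase m = u ++ v := by
    rw [List.erase_append_right _ fun h => lt_irrefl m (hu m h), List.erase_cons_head]
  rw [insertCols, List.length_append, List.length_singleton, insertColsAux_succ_concat, hmax]
  simp only [herase]
  rw [insertColsAux_eq_insertCols (by simp)]

open List in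
lemma perm_of_perm_middle_concat {α : Type*} {a b : α} {l₁ l₂ l₃ l₄ : List α}
    (h : l₁ ++ a :: l₂ ++ [b] ~ l₃ ++ b :: l₄ ++ [a]) : l₁ ++ l₂ ~ l₃ ++ l₄ := by
  have h' : b :: a :: (l₁ ++ l₂) ~ b :: a :: (l₃ ++ l₄) :=
    calc b :: a :: (l₁ ++ l₂) ~ l₁ ++ a :: l₂ ++ [b] :=
          ((perm_append_singleton b _).trans (perm_middle.cons b)).symm
      _ ~ l₃ ++ b :: l₄ ++ [a] := h
      _ ~ b :: a :: (l₃ ++ l₄) :=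
          (perm_append_singleton a _).trans ((perm_middle.cons a).trans (Perm.swap b a _))
  exact (perm_cons _).1 ((perm_cons _).1 h')

open List in
lemma insertCols_pair_step (f : ℕ → ℕ) {a b c d : List (ℕ × ℕ)} {P x Q M : ℕ}
    (hQ : Q < P) (hx : x < M) (hcd : ∀ p ∈ c ++ d, p.1 < P) (hab : ∀ p ∈ a ++ b, p.2 < M)
    (hfM : f M = Q) (hfx : f x = P)
    (ih : insertCols ((c ++ d).map Prod.fst) =
      (insertCols ((a ++ b).map Prod.snd)).map (fun col => sortDesc (col.map f))) :
    insertCols ((c ++ (P, x) :: d ++ [(Q, M)]).map Prod.fst) =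
      (insertCols ((a ++ (Q, M) :: b ++ [(P, x)]).map Prod.snd)).map
        (fun col => sortDesc (col.map f)) := by
  simp only [map_append, map_cons, map_nil]
  rw [insertCols_middle_concat hQ (forall_mem_map.2 fun p hp => hcd p (by simp [hp]))
      (forall_mem_map.2 fun p hp => (hcd p (by simp [hp])).le),
    insertCols_middle_concat hx (forall_mem_map.2 fun p hp => hab p (by simp [hp]))
      (forall_mem_map.2 fun p hp => (hab p (by simp [hp])).le),
    ← map_append, ← map_append, ih, map_cons, map_cons, map_singleton, hfM, hfx]
  simp only [sortDesc, if_neg hQ.not_ge]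

open List in
theorem insertCols_map_fst_eq (f : ℕ → ℕ) {l l' : List (ℕ × ℕ)}
    (hl : l.Pairwise (fun p q => p.1 < q.1)) (hl' : l'.Pairwise (fun p q => p.2 < q.2))
    (hperm : l' ~ l) (hf : ∀ p ∈ l, f p.2 = p.1) :
    insertCols (l'.map Prod.fst) =
      (insertCols (l.map Prod.snd)).map (fun col => sortDesc (col.map f)) := by
  rcases l.eq_nil_or_concat with rfl | ⟨l₀, ⟨P, x⟩, rfl⟩
  · rw [perm_nil.1 hperm]; rfl
  rcases l'.eq_nil_or_concat with rfl | ⟨l₃, ⟨Q, M⟩, rfl⟩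
  · simpa using hperm.length_eq
  simp only [concat_eq_append] at hl hl' hperm hf ⊢
  have hP : ∀ p ∈ l₀, p.1 < P := fun p hp =>
    (pairwise_append.1 hl).2.2 p hp _ (mem_singleton_self _)
  have hM : ∀ p ∈ l₃, p.2 < M := fun p hp =>
    (pairwise_append.1 hl').2.2 p hp _ (mem_singleton_self _)
  by_cases hsame : (Q, M) = (P, x)
  · obtain ⟨rfl, rfl⟩ := Prod.mk.inj hsame
    have hperm₀ : l₃ ~ l₀ := (perm_append_right_iff _).1 hperm
    simp only [map_append, map_cons, map_nil]
    rw [insertCols_concat_of_forall_le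
        (forall_mem_map.2 fun p hp => (hP p (hperm₀.subset hp)).le),
      insertCols_concat_of_forall_le
        (forall_mem_map.2 fun p hp => (hM p (hperm₀.symm.subset hp)).le),
      insertCols_map_fst_eq f (hl.sublist (sublist_append_left _ _))
        (hl'.sublist (sublist_append_left _ _)) hperm₀ (fun p hp => hf p (mem_append_left _ hp)),
      map_cons, map_singleton, hf (Q, M) (by simp)]
    rfl
  have hQM : (Q, M) ∈ l₀ := by
    simpa [hsame] using hperm.subset (mem_append_right l₃ (mem_singleton_self (Q, M)))
  have hPx : (P, x) ∈ l₃ := by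
    simpa [Ne.symm hsame] using
      hperm.symm.subset (mem_append_right l₀ (mem_singleton_self (P, x)))
  obtain ⟨a, b, rfl⟩ := append_of_mem hQM
  obtain ⟨c, d, rfl⟩ := append_of_mem hPx
  have hrest : c ++ d ~ a ++ b := perm_of_perm_middle_concat hperm
  have hcd : ∀ p ∈ c ++ d, p.1 < P := fun p hp => hP p (by
    have := hrest.subset hp; simp only [mem_append, mem_cons] at this ⊢; tauto)
  have hab : ∀ p ∈ a ++ b, p.2 < M := fun p hp => hM p (by
    have := hrest.symm.subset hp; simp only [mem_append, mem_cons] at this ⊢; tauto)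
  exact insertCols_pair_step f (hP (Q, M) (by simp)) (hM (P, x) (by simp)) hcd hab
    (hf (Q, M) (by simp)) (hf (P, x) (by simp))
    (insertCols_map_fst_eq f (hl.sublist (by simp)) (hl'.sublist (by simp)) hrest
      (fun p hp => hf p (by simp at hp ⊢; tauto)))
termination_by l.length

lemma idxOf_permWord {n : ℕ} (σ : Equiv.Perm (Fin n)) (i : Fin n) :
    (permWord σ).idxOf ((σ i : ℕ) + 1) = i := by
  have hnodup : (permWord σ).Nodup :=
    List.nodup_ofFn.2 fun i j h => σ.injective (Fin.ext (by simpa using h))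
  simpa [permWord] using hnodup.idxOf_getElem i (by simp [permWord])

/-- `P(σ⁻¹) = Q(σ)`. -/
theorem insertion_of_inverse_eq_recording (n : ℕ) (σ : Equiv.Perm (Fin n)) :
    insertCols (permWord σ⁻¹) = Qcols σ := by
  set point : Fin n → ℕ × ℕ := fun i => ((i : ℕ) + 1, (σ i : ℕ) + 1)
  have h := insertCols_map_fst_eq (fun v => (permWord σ).idxOf v + 1)
    (l := List.ofFn point) (l' := List.ofFn (point ∘ ⇑σ⁻¹))
    (List.pairwise_ofFn.2 fun i j hij => by simpa [point] using hij)
    (List.pairwise_ofFn.2 fun i j hij => by simpa [point] using hij)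
    (Equiv.Perm.ofFn_comp_perm σ⁻¹ point)
    (by simp [List.mem_ofFn, point, idxOf_permWord])
  rw [List.map_ofFn, List.map_ofFn] at h
  exact h
end

section
/- Let σ be an involution of the symmetric group S_n (σ∘σ = identity). Then the columns of the Young-Fibonacci insertion tableau P(σ) are exactly the cycles of σ: the height-2 columns of P(σ) are precisely the two-element sets {a, σ(a)} with σ(a) ≠ a (with the larger element on top), and the entries of the height-1 columns of P(σ) are precisely the fixed points of σ. -/
/-! Write `permWord σ` as `L.map f`, where `L = [1, …, n]` and `f` is `σ` acting on letters.
The letter read first is `f s` with `s = max L`. If `s` is fixed, every other letter `f t` is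
below `s`, so `s` stays single. Otherwise `s = f (f s)` occurs to the left of `f s` and is the
largest letter there, so it is matched with `f s`. In both cases the letters not yet settled form
the word of `f` on an `f`-stable increasing list with the cycle of `s` removed, and induction
applies. -/

section Insertion

lemma insertColsAux_concat (fuel : ℕ) (l : List ℕ) (x : ℕ) :
    insertColsAux (fuel + 1) (l ++ [x]) =
      match (l.filter (fun y => decide (x < y))).max? with
      | none => [x] :: insertColsAux fuel l
      | some m => [m, x] :: insertColsAux fuel (l.erase m) := by
  rw [insertColsAux.eq_3 _ _ (by simp), List.getLast!_eq_getLast?_getD, List.getLast?_concat,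
    Option.getD_some, List.dropLast_concat]

lemma insertColsAux_congr_fuel {fuel fuel' : ℕ} {w : List ℕ} (h : w.length ≤ fuel)
    (h' : w.length ≤ fuel') : insertColsAux fuel w = insertColsAux fuel' w := by
  induction fuel generalizing fuel' w with
  | zero =>
    rw [List.eq_nil_of_length_eq_zero (Nat.le_zero.mp h), insertColsAux_nil, insertColsAux_nil]
  | succ fuel ih =>
    rcases List.eq_nil_or_concat' w with rfl | ⟨l, x, rfl⟩
    · rw [insertColsAux_nil, insertColsAux_nil]
    · obtain ⟨fuel', rfl⟩ := Nat.exists_eq_add_one.mpr (by simp at h'; omega : 0 < fuel')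
      simp only [List.length_append, List.length_singleton, Nat.add_le_add_iff_right] at h h'
      rw [insertColsAux_concat, insertColsAux_concat]
      split
      · rw [ih h h']
      · next m _ =>
        have hle := (l.erase_sublist (a := m)).length_le
        rw [ih (hle.trans h) (hle.trans h')]

lemma insertCols_concat (l : List ℕ) (x : ℕ) :
    insertCols (l ++ [x]) =
      match (l.filter (fun y => decide (x < y))).max? with
      | none => [x] :: insertCols l
      | some m => [m, x] :: insertCols (l.erase m) := by
  rw [insertCols, List.length_append, List.length_singleton, insertColsAux_concat]
  split
  · rfl
  · exact congrArg _ (insertColsAux_congr_fuel (List.erase_sublist.length_le) le_rfl)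

end Insertion

section Involution

variable {f : ℕ → ℕ}

def cycleColumn (f : ℕ → ℕ) (a : ℕ) : List ℕ :=
  if f a = a then [a] else [max a (f a), min a (f a)]

lemma cycleColumn_apply (hf : Function.Involutive f) (a : ℕ) :
    cycleColumn f (f a) = cycleColumn f a := by
  by_cases h : f a = a
  · rw [h]
  · have h' : ¬a = f a := Ne.symm h
    simp only [cycleColumn, if_neg h, if_neg h', hf a, max_comm, min_comm]

lemma pair_eq_cycleColumn_iff {x y a : ℕ} :
    [x, y] = cycleColumn f a ↔ f a ≠ a ∧ x = max a (f a) ∧ y = min a (f a) := by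
  unfold cycleColumn
  split_ifs with h <;> simp [h]

lemma singleton_eq_cycleColumn_iff {x a : ℕ} : [x] = cycleColumn f a ↔ f a = a ∧ x = a := by
  unfold cycleColumn
  split_ifs with h <;> simp [h]

variable {M : List ℕ} {s : ℕ}

lemma apply_mem_of_apply_ne (hclosed : ∀ a ∈ M ++ [s], f a ∈ M ++ [s]) {a : ℕ}
    (ha : a ∈ M ++ [s]) (has : f a ≠ s) : f a ∈ M := by
  simpa [has] using hclosed a ha

lemma apply_mem_of_apply_eq_self (hf : Function.Involutive f) (hlt : ∀ a ∈ M, a < s)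
    (hclosed : ∀ a ∈ M ++ [s], f a ∈ M ++ [s]) (hs : f s = s) {a : ℕ} (ha : a ∈ M) :
    f a ∈ M :=
  apply_mem_of_apply_ne hclosed (by simp [ha]) fun h => (hlt a ha).ne (by rw [← hf a, h, hs])

lemma apply_mem_erase_of_apply_ne (hf : Function.Involutive f) (hM : M.Nodup)
    (hlt : ∀ a ∈ M, a < s) (hclosed : ∀ a ∈ M ++ [s], f a ∈ M ++ [s]) {a : ℕ}
    (ha : a ∈ M.erase (f s)) : f a ∈ M.erase (f s) := by
  obtain ⟨hafs, haM⟩ := hM.mem_erase_iff.mp ha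
  have has : f a ≠ s := fun h => hafs (by rw [← h, hf a])
  exact hM.mem_erase_iff.mpr ⟨fun h => (hlt a haM).ne (hf.injective h),
    apply_mem_of_apply_ne hclosed (by simp [haM]) has⟩

lemma insertCols_map_concat_of_apply_eq (hf : Function.Involutive f) (hlt : ∀ a ∈ M, a < s)
    (hclosed : ∀ a ∈ M ++ [s], f a ∈ M ++ [s]) (hs : f s = s) :
    insertCols ((M ++ [s]).map f) = [s] :: insertCols (M.map f) := by
  have hnil : (M.map f).filter (fun y => decide (s < y)) = [] := by
    refine List.filter_eq_nil_iff.mpr fun y hy => ?_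
    obtain ⟨a, ha, rfl⟩ := List.mem_map.mp hy
    simpa using (hlt _ (apply_mem_of_apply_eq_self hf hlt hclosed hs ha)).le
  rw [List.map_append, List.map_singleton, insertCols_concat, hs, hnil, List.max?_nil]

lemma insertCols_map_concat_of_apply_ne (hf : Function.Involutive f) (hlt : ∀ a ∈ M, a < s)
    (hclosed : ∀ a ∈ M ++ [s], f a ∈ M ++ [s]) (hs : f s ≠ s) :
    insertCols ((M ++ [s]).map f) = [s, f s] :: insertCols ((M.erase (f s)).map f) := by
  have hfs : f s ∈ M := apply_mem_of_apply_ne hclosed (by simp) hs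
  have hmax : ((M.map f).filter (fun y => decide (f s < y))).max? = some s := by
    refine List.max?_eq_some_iff.mpr ⟨?_, fun y hy => ?_⟩
    · exact List.mem_filter.mpr ⟨List.mem_map.mpr ⟨f s, hfs, hf s⟩, by simpa using hlt _ hfs⟩
    · obtain ⟨a, ha, rfl⟩ := List.mem_map.mp (List.mem_of_mem_filter hy)
      by_cases has : f a = s
      · exact has.le
      · exact (hlt _ (apply_mem_of_apply_ne hclosed (by simp [ha]) has)).le
  rw [List.map_append, List.map_singleton, insertCols_concat, hmax, List.map_erase hf.injective,
    hf s]

theorem mem_insertCols_map_iff (hf : Function.Involutive f) {L : List ℕ}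
    (hsort : L.Pairwise (· < ·)) (hclosed : ∀ a ∈ L, f a ∈ L) (c : List ℕ) :
    c ∈ insertCols (L.map f) ↔ ∃ a ∈ L, c = cycleColumn f a := by
  induction hn : L.length using Nat.strong_induction_on generalizing L with
  | _ n ih =>
    rcases List.eq_nil_or_concat' L with rfl | ⟨M, s, rfl⟩
    · simp [insertCols, insertColsAux_nil]
    obtain ⟨hMsort, -, hlt⟩ := List.pairwise_append.mp hsort
    replace hlt : ∀ a ∈ M, a < s := fun a ha => hlt a ha s (List.mem_singleton_self s)
    have hlen : ∀ M' : List ℕ, M'.Sublist M → M'.length < n := fun M' h => by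
      have := h.length_le; simp at hn; omega
    by_cases hs : f s = s
    · rw [insertCols_map_concat_of_apply_eq hf hlt hclosed hs, List.mem_cons,
        ih _ (hlen M (List.Sublist.refl M)) hMsort
          (fun _ => apply_mem_of_apply_eq_self hf hlt hclosed hs) rfl]
      simp [cycleColumn, hs, or_comm]
    · have hfs : f s ∈ M := apply_mem_of_apply_ne hclosed (by simp) hs
      have hMnodup := hMsort.nodup
      rw [insertCols_map_concat_of_apply_ne hf hlt hclosed hs, List.mem_cons,
        ih _ (hlen _ List.erase_sublist) (hMsort.sublist List.erase_sublist)
          (fun _ => apply_mem_erase_of_apply_ne hf hMnodup hlt hclosed) rfl]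
      have hcol : cycleColumn f s = [s, f s] := by simp [cycleColumn, hs, (hlt _ hfs).le]
      constructor
      · rintro (rfl | ⟨a, ha, rfl⟩)
        · exact ⟨s, by simp, hcol.symm⟩
        · exact ⟨a, List.mem_append_left _ (List.mem_of_mem_erase ha), rfl⟩
      · rintro ⟨a, ha, rfl⟩
        by_cases has : a = s ∨ a = f s
        · rcases has with rfl | rfl
          · exact Or.inl hcol
          · exact Or.inl ((cycleColumn_apply hf s).trans hcol)
        · obtain ⟨has, hafs⟩ := not_or.mp has
          exact Or.inr ⟨a, hMnodup.mem_erase_iff.mpr ⟨hafs, by simpa [has] using ha⟩, rfl⟩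

end Involution

section Permutation

variable {n : ℕ}

def letterAction (σ : Equiv.Perm (Fin n)) : ℕ → ℕ
  | 0 => 0
  | k + 1 => if h : k < n then (σ ⟨k, h⟩ : ℕ) + 1 else k + 1

lemma letterAction_succ (σ : Equiv.Perm (Fin n)) (a : Fin n) :
    letterAction σ ((a : ℕ) + 1) = (σ a : ℕ) + 1 := by
  simp [letterAction]

lemma letterAction_involutive {σ : Equiv.Perm (Fin n)} (hσ : ∀ a, σ (σ a) = a) :
    Function.Involutive (letterAction σ) := by
  rintro (_ | k)
  · rfl
  · by_cases hk : k < n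
    · have := letterAction_succ σ ⟨k, hk⟩
      simp only at this
      rw [this, letterAction_succ, hσ]
    · simp [letterAction, hk]

lemma permWord_eq_map_letterAction (σ : Equiv.Perm (Fin n)) :
    permWord σ = (List.ofFn fun a : Fin n => (a : ℕ) + 1).map (letterAction σ) := by
  simp only [permWord, List.map_ofFn, Function.comp_def, letterAction_succ]

end Permutation

/-- for an involution `σ`, the height-2 columns of `P(σ)` are exactly
the pairs `{a, σ(a)}` with `σ(a) ≠ a` (larger on top), and the height-1 columns
are exactly the fixed points of `σ` (letters written `1`-based). -/
theorem involution_insertion_tableau_columns_are_cycles (n : ℕ)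
    (σ : Equiv.Perm (Fin n)) (hσ : ∀ a, σ (σ a) = a) :
    (∀ x y : ℕ, [x, y] ∈ insertCols (permWord σ) ↔
      ∃ a : Fin n, σ a ≠ a ∧ x = max ((a : ℕ) + 1) ((σ a : ℕ) + 1) ∧
        y = min ((a : ℕ) + 1) ((σ a : ℕ) + 1)) ∧
    (∀ x : ℕ, [x] ∈ insertCols (permWord σ) ↔
      ∃ a : Fin n, σ a = a ∧ x = (a : ℕ) + 1) := by
  set L := List.ofFn fun a : Fin n => (a : ℕ) + 1
  have hsort : L.Pairwise (· < ·) := List.pairwise_ofFn.mpr fun i j h => by simpa using h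
  have hclosed : ∀ b ∈ L, letterAction σ b ∈ L := by
    simp only [L, List.mem_ofFn]
    rintro _ ⟨a, rfl⟩
    exact ⟨σ a, (letterAction_succ σ a).symm⟩
  have hcols := mem_insertCols_map_iff (letterAction_involutive hσ) hsort hclosed
  rw [permWord_eq_map_letterAction]
  refine ⟨fun x y => ?_, fun x => ?_⟩
  · rw [hcols]
    simp only [L, List.mem_ofFn, exists_exists_eq_and, pair_eq_cycleColumn_iff,
      letterAction_succ, ne_eq, Nat.add_right_cancel_iff, Fin.val_inj]
  · rw [hcols]
    simp only [L, List.mem_ofFn, exists_exists_eq_and, singleton_eq_cycleColumn_iff,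
      letterAction_succ, Nat.add_right_cancel_iff, Fin.val_inj]
end

section
/- For every standard Young-Fibonacci tableau t of size n, the word max(t), obtained by reading the top row of t from left to right followed by the bottom row of t from right to left, is a permutation of {1,…,n} with P(max(t)) = t, and it is the lexicographically greatest permutation whose Young-Fibonacci insertion tableau is t. -/
/-!
Insertion reads the word from the right, so the last letter of `w` settles the first column of
`P(w)`, and the rest of `P(w)` is the insertion tableau of what is left once that column is
removed. If the first column of `t` is `[a]` or `[b, a]`, then `b` (resp. `a`) exceeds every entry
to its right; so `max(t)` ends with `a`, begins with the largest letter `b` in the height-2 case,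
and the rest of it is `max` of the remaining columns. Conversely, a word inserting to `t` ends
with `a` and, in the height-2 case, contains `b`: either it begins with `b`, and removing `b` and
`a` leaves a word inserting to the remaining columns, or it begins with a smaller letter.
-/

inductive IsYFFilling : List (List ℕ) → Prop
  | nil : IsYFFilling []
  | single {a : ℕ} {t : List (List ℕ)} :
      (∀ x ∈ t.flatten, x < a) → IsYFFilling t → IsYFFilling ([a] :: t)
  | pair {b a : ℕ} {t : List (List ℕ)} :
      a < b → (∀ x ∈ t.flatten, x < b) → IsYFFilling t → IsYFFilling ([b, a] :: t)

theorem isYFFilling_of_forall {t : List (List ℕ)}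
    (hlen : ∀ c ∈ t, c.length = 1 ∨ c.length = 2)
    (hdec : ∀ c ∈ t, List.IsChain (fun a b => b < a) c)
    (htop : ∀ i j : ℕ, i < j → j < t.length →
      ∀ a ∈ (t.getD i []).head?, ∀ x ∈ t.getD j [], x < a) :
    IsYFFilling t := by
  induction t with
  | nil => exact .nil
  | cons c t ih =>
    have htail : IsYFFilling t :=
      ih (fun d hd => hlen d (.tail _ hd)) (fun d hd => hdec d (.tail _ hd))
        fun i j hij hj => htop (i + 1) (j + 1) (by omega) (by simpa using hj)
    have hhead : ∀ a ∈ c.head?, ∀ x ∈ t.flatten, x < a := by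
      intro a ha x hx
      obtain ⟨d, hd, hxd⟩ := List.mem_flatten.mp hx
      obtain ⟨j, hj, rfl⟩ := List.getElem_of_mem hd
      exact htop 0 (j + 1) j.succ_pos (by simpa using hj) a (by simpa using ha) x
        (by simpa [hj] using hxd)
    rcases hlen c (.head _) with h1 | h2
    · obtain ⟨a, rfl⟩ := List.length_eq_one_iff.mp h1
      exact .single (hhead a rfl) htail
    · obtain ⟨b, a, rfl⟩ := List.length_eq_two.mp h2
      have hab : a < b := by simpa using hdec _ (.head _)
      exact .pair hab (hhead b rfl) htail

theorem insertColsAux_succ_append_singleton (f : ℕ) (w : List ℕ) (x : ℕ) :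
    insertColsAux (f + 1) (w ++ [x]) =
      match (w.filter (fun y => decide (x < y))).max? with
      | none => [x] :: insertColsAux f w
      | some m => [m, x] :: insertColsAux f (w.erase m) := by
  obtain ⟨y, v, hyv⟩ := List.exists_cons_of_ne_nil (List.concat_ne_nil x w)
  rw [hyv, insertColsAux, ← hyv, List.dropLast_concat,
    List.getLast!_of_getLast? List.getLast?_concat]
  exact List.cons_ne_nil y v

theorem insertColsAux_congr_fuel_s3 {f g : ℕ} {w : List ℕ} (hf : w.length ≤ f)
    (hg : w.length ≤ g) : insertColsAux f w = insertColsAux g w := by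
  induction f generalizing g w with
  | zero => rw [List.length_eq_zero_iff.mp (by omega : w.length = 0)]; cases g <;> rfl
  | succ f ih =>
    rcases List.eq_nil_or_concat' w with rfl | ⟨u, x, rfl⟩
    · cases g <;> rfl
    obtain ⟨g, rfl⟩ : ∃ g', g = g' + 1 := Nat.exists_eq_succ_of_ne_zero (by simp at hg; omega)
    simp only [List.length_append, List.length_singleton] at hf hg
    rw [insertColsAux_succ_append_singleton, insertColsAux_succ_append_singleton]
    rcases (u.filter fun y => decide (x < y)).max? with _ | m
    · exact congrArg _ (ih (by omega) (by omega))
    · have := u.length_erase_le (a := m)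
      exact congrArg _ (ih (by omega) (by omega))

theorem insertCols_append_singleton (w : List ℕ) (x : ℕ) :
    insertCols (w ++ [x]) =
      match (w.filter (fun y => decide (x < y))).max? with
      | none => [x] :: insertCols w
      | some m => [m, x] :: insertCols (w.erase m) := by
  rw [insertCols, List.length_append, List.length_singleton,
    insertColsAux_succ_append_singleton]
  rcases (w.filter fun y => decide (x < y)).max? with _ | m
  · rfl
  · exact congrArg _ (insertColsAux_congr_fuel_s3 w.length_erase_le le_rfl)

theorem insertCols_append_singleton_eq_single_cons_iff {w : List ℕ} {x a : ℕ}
    {t : List (List ℕ)} :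
    insertCols (w ++ [x]) = [a] :: t ↔ x = a ∧ (∀ y ∈ w, y ≤ x) ∧ insertCols w = t := by
  rw [insertCols_append_singleton]
  rcases hm : (w.filter fun y => decide (x < y)).max? with _ | m
  · have hle : ∀ y ∈ w, y ≤ x := by simpa [List.filter_eq_nil_iff] using hm
    constructor
    · rintro ⟨⟩
      exact ⟨rfl, hle, rfl⟩
    · rintro ⟨rfl, -, rfl⟩
      rfl
  · obtain ⟨hmw, hxm⟩ : m ∈ w ∧ x < m := by simpa using List.max?_mem hm
    exact iff_of_false (by simp) fun ⟨_, hle, _⟩ => (hle m hmw).not_gt hxm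

theorem insertCols_append_singleton_eq_pair_cons_iff {w : List ℕ} {x b a : ℕ}
    {t : List (List ℕ)} :
    insertCols (w ++ [x]) = [b, a] :: t ↔
      x = a ∧ (w.filter (fun y => decide (x < y))).max? = some b ∧
        insertCols (w.erase b) = t := by
  rw [insertCols_append_singleton]
  rcases (w.filter fun y => decide (x < y)).max? with _ | m
  · simp
  · simp only [List.cons.injEq, Option.some.injEq, and_true]
    constructor
    · rintro ⟨⟨rfl, rfl⟩, rfl⟩
      exact ⟨rfl, rfl, rfl⟩
    · rintro ⟨rfl, rfl, rfl⟩
      exact ⟨⟨rfl, rfl⟩, rfl⟩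

theorem maxWord_single_cons (a : ℕ) (t : List (List ℕ)) :
    maxWord ([a] :: t) = maxWord t ++ [a] := by
  simp [maxWord]

theorem maxWord_pair_cons (b a : ℕ) (t : List (List ℕ)) :
    maxWord ([b, a] :: t) = b :: (maxWord t ++ [a]) := by
  simp [maxWord]

theorem List.Lex.append_of_length_eq {α : Type*} {r : α → α → Prop} {l₁ l₂ : List α}
    (s₁ s₂ : List α) (hlen : l₁.length = l₂.length) (h : List.Lex r l₁ l₂) :
    List.Lex r (l₁ ++ s₁) (l₂ ++ s₂) := by
  induction h with
  | nil => simp at hlen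
  | cons _ ih => exact .cons (ih (by simpa using hlen))
  | rel hr => exact .rel hr

namespace IsYFFilling

variable {t : List (List ℕ)}

theorem maxWord_perm (ht : IsYFFilling t) : (maxWord t).Perm t.flatten := by
  induction ht with
  | nil => rfl
  | @single a t _ _ ih =>
    rw [maxWord_single_cons]
    simpa using (List.perm_append_singleton a (maxWord t)).trans (ih.cons a)
  | @pair b a t _ _ _ ih =>
    rw [maxWord_pair_cons]
    simpa using ((List.perm_append_singleton a (maxWord t)).trans (ih.cons a)).cons b

theorem insertCols_maxWord (ht : IsYFFilling t) : insertCols (maxWord t) = t := by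
  induction ht with
  | nil => rfl
  | @single a t hlt ht ih =>
    rw [maxWord_single_cons, insertCols_append_singleton_eq_single_cons_iff]
    exact ⟨rfl, fun y hy => (hlt y (ht.maxWord_perm.mem_iff.mp hy)).le, ih⟩
  | @pair b a t hab hlt ht ih =>
    rw [maxWord_pair_cons, ← List.cons_append, insertCols_append_singleton_eq_pair_cons_iff,
      List.erase_cons_head]
    refine ⟨rfl, List.max?_eq_some_iff.mpr ⟨by simpa using hab, fun y hy => ?_⟩, ih⟩
    rcases List.mem_cons.mp (List.mem_of_mem_filter hy) with rfl | hy
    · rfl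
    · exact (hlt y (ht.maxWord_perm.mem_iff.mp hy)).le

theorem eq_maxWord_or_lex_lt (ht : IsYFFilling t) {w : List ℕ} (hw : w.Perm t.flatten)
    (hins : insertCols w = t) : w = maxWord t ∨ List.Lex (· < ·) w (maxWord t) := by
  induction ht generalizing w with
  | nil => exact .inl (List.perm_nil.mp hw)
  | @single a t hlt ht ih =>
    rcases List.eq_nil_or_concat' w with rfl | ⟨u, x, rfl⟩
    · cases hins
    obtain ⟨rfl, -, hu⟩ := insertCols_append_singleton_eq_single_cons_iff.mp hins
    have hperm : u.Perm t.flatten := by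
      simpa using (List.perm_append_singleton x u).symm.trans hw
    rw [maxWord_single_cons]
    exact (ih hperm hu).imp (congrArg (· ++ [x]))
      (.append_of_length_eq _ _ (hperm.length_eq.trans ht.maxWord_perm.length_eq.symm))
  | @pair b a t _ hlt ht ih =>
    rcases List.eq_nil_or_concat' w with rfl | ⟨u, x, rfl⟩
    · cases hins
    obtain ⟨rfl, hmax, hu⟩ := insertCols_append_singleton_eq_pair_cons_iff.mp hins
    have hperm : u.Perm (b :: t.flatten) := by
      simpa using ((List.perm_append_singleton x u).symm.trans hw).trans (.swap _ _ _)
    rw [maxWord_pair_cons]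
    rcases u with _ | ⟨y, v⟩
    · simp at hmax
    obtain rfl | hyb := eq_or_ne y b
    · rw [List.erase_cons_head] at hu
      have hv : v.Perm t.flatten := hperm.cons_inv
      exact (ih hv hu).imp (congrArg (y :: · ++ [x])) fun hlex => .cons
        (.append_of_length_eq _ _ (hv.length_eq.trans ht.maxWord_perm.length_eq.symm) hlex)
    · have hyt : y ∈ t.flatten :=
        (List.mem_cons.mp (hperm.subset List.mem_cons_self)).resolve_left hyb
      exact .inr (.rel (hlt y hyt))

end IsYFFilling

/-- `max(t)` (top row left to right, then bottom row right to left)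
is a permutation of `{1,…,n}`, its insertion tableau is `t`, and it is
lexicographically greatest among the permutations inserting to `t`. -/
theorem maxWord_is_lex_greatest_in_class (n : ℕ) (t : List (List ℕ))
    (ht : IsYFT n t) :
    (maxWord t).Perm (List.range' 1 n) ∧
    insertCols (maxWord t) = t ∧
    ∀ w : List ℕ, w.Perm (List.range' 1 n) → insertCols w = t →
      w = maxWord t ∨ List.Lex (· < ·) w (maxWord t) := by
  obtain ⟨hlen, hdec, htop, hentries⟩ := ht
  have hfill : IsYFFilling t := isYFFilling_of_forall hlen hdec htop
  exact ⟨hfill.maxWord_perm.trans hentries, hfill.insertCols_maxWord,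
    fun w hw hins => hfill.eq_maxWord_or_lex_lt (hw.trans hentries.symm) hins⟩
end

section
/- The Young-Fibonacci numbers N_{u,v} satisfy the recurrences: N_{∅,∅} = 1; N_{2,2} = 0; N_{1u,v1} = N_{u,v}; N_{1u,v2} = N_{u,v1}; N_{2u,v1} = Σ_{w ∈ v^{1−}} N_{u,w}; and N_{2u,v2} = Σ_{w ∈ v^{1−}} N_{u,w1}; here 1u (resp. 2u) denotes the snakeshape obtained from u by prepending a part 1 (resp. 2), v1 (resp. v2, w1) denotes the composition obtained by appending a part 1 (resp. 2, 1) at the right end, and v^{1−} denotes the multiset of compositions obtained from v by choosing one position of v and either deleting the part at that position if it equals 1 or decreasing it by 1 if it equals 2; the sums are taken with multiplicity over this multiset. -/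
/-! In a semistandard Young–Fibonacci tableau of content `v ++ [c]` with `c ≠ 0`, the largest letter
`ℓ(v) + 1` occurs, and the top of the first column dominates every entry, so that top is `ℓ(v) + 1`.
Deleting the first column is therefore a bijection onto tableaux of the remaining shape: a column
`[ℓ(v) + 1]` leaves content `v ++ [c - 1]`, and a column `[ℓ(v) + 1, p + 1]` leaves content
`v ++ [c - 1]` with its `p`-th part lowered by one. A part lowered to zero is removed by relabelling
the larger entries one step down, which produces the corresponding member of `v^{1-}`. -/

theorem List.finite_setOf_length_le_forall_mem {α : Type*} {s : Set α} (hs : s.Finite) (n : ℕ) :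
    {l : List α | l.length ≤ n ∧ ∀ x ∈ l, x ∈ s}.Finite := by
  have := hs.to_subtype
  refine ((List.finite_length_le s n).image (List.map Subtype.val)).subset ?_
  rintro l ⟨hl, hls⟩
  exact ⟨l.attachWith (· ∈ s) hls, by simpa using hl, List.attachWith_map_subtype_val hls⟩

theorem List.getD_eraseIdx {α : Type*} (l : List α) (d : α) (p i : ℕ) :
    (l.eraseIdx p).getD i d = if i < p then l.getD i d else l.getD (i + 1) d := by
  simp only [List.getD_eq_getElem?_getD, List.getElem?_eraseIdx]
  split_ifs <;> rfl

theorem List.sum_map_range_eq_sum_fin {M : Type*} [AddCommMonoid M] (n : ℕ) (f : ℕ → M) :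
    ((List.range n).map f).sum = ∑ p : Fin n, f p := by
  rw [Fin.sum_univ_eq_sum_range, Finset.sum_eq_multiset_sum]
  rfl

theorem isSSYFT_nil_iff {t : List (List ℕ)} : IsSSYFT [] t ↔ t = [] := by
  refine ⟨fun h => by simpa [shapeOf] using h.1, ?_⟩
  rintro rfl
  exact ⟨rfl, by simp, fun _ _ _ hj => absurd hj (by simp), by simp⟩

theorem isSSYFT_cons_iff {k : ℕ} {u col : List ℕ} {t : List (List ℕ)} :
    IsSSYFT (k :: u) (col :: t) ↔
      col.length = k ∧ col.IsChain (fun a b => b < a) ∧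
        (∀ a ∈ col.head?, ∀ x ∈ t.flatten, x ≤ a) ∧ (∀ x ∈ col, 1 ≤ x) ∧ IsSSYFT u t := by
  simp only [IsSSYFT, shapeOf, List.map_cons, List.cons.injEq, List.forall_mem_cons,
    List.flatten_cons, List.mem_append, List.length_cons]
  constructor
  · rintro ⟨⟨hk, hu⟩, ⟨hcol, ht⟩, htop, hpos⟩
    refine ⟨hk, hcol, fun a ha x hx => ?_, fun x hx => hpos x (.inl hx), hu, ht, ?_,
      fun x hx => hpos x (.inr hx)⟩
    · obtain ⟨d, hd, hxd⟩ := List.mem_flatten.mp hx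
      obtain ⟨j, hj, rfl⟩ := List.getElem_of_mem hd
      exact htop 0 (j + 1) j.succ_pos (by simpa using hj) a ha x
        (by rwa [List.getD_cons_succ, List.getD_eq_getElem _ _ hj])
    · intro i j hij hj
      exact htop (i + 1) (j + 1) (by omega) (by omega)
  · rintro ⟨hk, hcol, htop, hpos, hu, ht, htop', hpos'⟩
    refine ⟨⟨hk, hu⟩, ⟨hcol, ht⟩, ?_, fun x hx => hx.elim (hpos x) (hpos' x)⟩
    rintro (_ | i) (_ | j) hij hj a ha x hx
    · omega
    · rw [List.getD_cons_succ, List.getD_eq_getElem _ _ (by simpa using hj)] at hx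
      exact htop a ha x (List.mem_flatten.mpr ⟨_, List.getElem_mem _, hx⟩)
    · omega
    · exact htop' i j (by omega) (by omega) a ha x hx

theorem IsSSYFT.exists_eq_cons {k : ℕ} {u : List ℕ} {t : List (List ℕ)}
    (h : IsSSYFT (k :: u) t) : ∃ col s, t = col :: s := by
  cases t with
  | nil => exact absurd h.1 (by simp [shapeOf])
  | cons col s => exact ⟨col, s, rfl⟩

theorem isSSYFT_map_iff {g : ℕ → ℕ} (hg : StrictMono g) (hg0 : g 0 = 0) {u : List ℕ}
    {t : List (List ℕ)} : IsSSYFT u (t.map (List.map g)) ↔ IsSSYFT u t := by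
  have hpos : ∀ x, 1 ≤ g x ↔ 1 ≤ x := fun x =>
    ⟨fun h => Nat.pos_of_ne_zero (by rintro rfl; omega), fun h => by have := hg h; omega⟩
  have hcol : ∀ i, (t.map (List.map g)).getD i [] = (t.getD i []).map g := fun i =>
    List.getD_map t [] (List.map g)
  unfold IsSSYFT shapeOf
  rw [List.map_map, ← List.map_flatten, List.forall_mem_map, List.forall_mem_map, List.length_map]
  refine and_congr (by simp [Function.comp_def])
    (and_congr ?_ (and_congr ?_ (forall₂_congr fun x _ => hpos x)))
  · exact forall₂_congr fun c _ =>
      (List.isChain_map g).trans (by simp only [hg.lt_iff_lt]; rfl)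
  · simp only [hcol, List.head?_map, Option.forall_mem_map, List.forall_mem_map, hg.le_iff_le]

theorem ContentIs.mem_flatten_iff {v : List ℕ} {t : List (List ℕ)} (hC : ContentIs v t)
    (a : ℕ) : a + 1 ∈ t.flatten ↔ v.getD a 0 ≠ 0 := by
  rw [← List.count_pos_iff, hC a, Nat.pos_iff_ne_zero]

theorem IsSSYFT.le_length_of_contentIs {u v : List ℕ} {t : List (List ℕ)} (hS : IsSSYFT u t)
    (hC : ContentIs v t) {x : ℕ} (hx : x ∈ t.flatten) : x ≤ v.length := by
  obtain ⟨a, rfl⟩ : ∃ a, x = a + 1 := ⟨x - 1, by have := hS.2.2.2 x hx; omega⟩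
  by_contra hlt
  exact (hC.mem_flatten_iff a).mp hx (List.getD_eq_default _ _ (by omega))

theorem finite_setOf_isSSYFT_contentIs (u v : List ℕ) :
    {t | IsSSYFT u t ∧ ContentIs v t}.Finite := by
  have hcols := List.finite_setOf_length_le_forall_mem (Set.finite_Iic v.length) u.sum
  refine (List.finite_setOf_length_le_forall_mem hcols u.length).subset ?_
  rintro t ⟨hS, hC⟩
  have hshape : t.map List.length = u := hS.1
  refine ⟨by rw [← hshape, List.length_map], fun c hc => ⟨?_, fun x hx => ?_⟩⟩
  · exact List.le_sum_of_mem (hshape ▸ List.mem_map_of_mem hc)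
  · exact hS.le_length_of_contentIs hC (List.mem_flatten.mpr ⟨c, hc, hx⟩)

instance (u v : List ℕ) : Finite {t // IsSSYFT u t ∧ ContentIs v t} :=
  (finite_setOf_isSSYFT_contentIs u v).to_subtype

theorem IsSSYFT.top_eq_of_contentIs {k a c : ℕ} {u v col : List ℕ} {s : List (List ℕ)}
    (hS : IsSSYFT (k :: u) ((a :: col) :: s)) (hC : ContentIs (v ++ [c]) ((a :: col) :: s))
    (hc : c ≠ 0) : a = v.length + 1 := by
  obtain ⟨-, hcol, htop, -, -⟩ := isSSYFT_cons_iff.mp hS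
  have hle : a ≤ v.length + 1 := by
    simpa using hS.le_length_of_contentIs hC (by simp)
  have hmem : v.length + 1 ∈ ((a :: col) :: s).flatten :=
    (hC.mem_flatten_iff _).mpr (by simpa using hc)
  simp only [List.flatten_cons, List.cons_append, List.mem_cons, List.mem_append] at hmem
  rcases hmem with h | h | h
  · exact h.symm
  · exact le_antisymm hle (hcol.rel_cons h).le
  · exact le_antisymm hle (htop a rfl _ h)

theorem contentIs_iff_of_flatten_eq_cons {w : List ℕ} {a : ℕ} {t s : List (List ℕ)}
    (h : t.flatten = (a + 1) :: s.flatten) (ha : w.getD a 0 ≠ 0) :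
    ContentIs w t ↔ ContentIs (w.set a (w.getD a 0 - 1)) s := by
  have hlt : a < w.length := by
    by_contra hge
    exact ha (List.getD_eq_default _ _ (by omega))
  refine forall_congr' fun i => ?_
  rw [h, List.count_cons]
  simp only [List.getD_eq_getElem?_getD, List.getElem?_set, beq_iff_eq, add_left_inj] at ha ⊢
  rcases eq_or_ne a i with rfl | hi
  · simp only [if_pos hlt, if_true, Option.getD_some]
    omega
  · simp only [if_neg hi, add_zero]

def natSuccAbove (p x : ℕ) : ℕ := if x < p then x else x + 1

def natPredAbove (p x : ℕ) : ℕ := if p < x then x - 1 else x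

theorem natSuccAbove_strictMono (p : ℕ) : StrictMono (natSuccAbove p) := by
  intro x y h
  unfold natSuccAbove
  split_ifs <;> omega

theorem natSuccAbove_natPredAbove {p x : ℕ} (hx : x ≠ p) :
    natSuccAbove p (natPredAbove p x) = x := by
  unfold natSuccAbove natPredAbove
  split_ifs <;> omega

theorem count_map_natSuccAbove (p i : ℕ) (l : List ℕ) :
    (l.map (natSuccAbove p)).count i =
      if i < p then l.count i else if i = p then 0 else l.count (i - 1) := by
  induction l with
  | nil => simp
  | cons x l ih =>
    simp only [List.map_cons, List.count_cons, ih, beq_iff_eq, natSuccAbove]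
    split_ifs <;> omega

theorem contentIs_map_natSuccAbove_iff {w : List ℕ} {p : ℕ} (hp : w.getD p 0 = 0)
    {t : List (List ℕ)} :
    ContentIs w (t.map (List.map (natSuccAbove (p + 1)))) ↔ ContentIs (w.eraseIdx p) t := by
  unfold ContentIs
  simp only [← List.map_flatten, count_map_natSuccAbove, List.getD_eraseIdx,
    Nat.add_lt_add_iff_right, Nat.add_right_cancel_iff, Nat.add_sub_cancel]
  constructor
  · intro h j
    have h1 := h j
    have h2 := h (j + 1)
    split_ifs at h1 h2 ⊢ <;> omega
  · intro h i
    rcases lt_trichotomy i p with hi | rfl | hi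
    · simpa [hi] using h i
    · simpa using hp.symm
    · have := h (i - 1)
      rw [if_neg (by omega), Nat.sub_add_cancel (by omega)] at this
      simp [hi.not_gt, hi.ne', this]

theorem IsSnakeshape.zero_notMem {v : List ℕ} (hv : IsSnakeshape v) : 0 ∉ v :=
  fun h => by have := hv 0 h; omega

theorem YFNumber_nil_nil : YFNumber [] [] = 1 := by
  have : Unique {t // IsSSYFT [] t ∧ ContentIs [] t} :=
    { default := ⟨[], isSSYFT_nil_iff.mpr rfl, fun _ => rfl⟩
      uniq := fun t => Subtype.ext (isSSYFT_nil_iff.mp t.2.1) }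
  exact Nat.card_unique

theorem YFNumber_eraseIdx (u : List ℕ) {w : List ℕ} {p : ℕ} (hp : w.getD p 0 = 0) :
    YFNumber u (w.eraseIdx p) = YFNumber u w := by
  have hg := natSuccAbove_strictMono (p + 1)
  have hg0 : natSuccAbove (p + 1) 0 = 0 := rfl
  refine Nat.card_eq_of_bijective
    (fun s => ⟨s.1.map (List.map (natSuccAbove (p + 1))),
      (isSSYFT_map_iff hg hg0).mpr s.2.1, (contentIs_map_natSuccAbove_iff hp).mpr s.2.2⟩)
    ⟨fun s s' h => Subtype.ext ?_, fun t => ?_⟩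
  · exact List.map_injective_iff.mpr (List.map_injective_iff.mpr hg.injective)
      (congrArg Subtype.val h)
  · obtain ⟨t, hS, hC⟩ := t
    have hmiss : p + 1 ∉ t.flatten := by rw [hC.mem_flatten_iff]; exact not_not.mpr hp
    have hlift : (t.map (List.map (natPredAbove (p + 1)))).map
        (List.map (natSuccAbove (p + 1))) = t := by
      rw [List.map_map]
      refine (List.map_congr_left fun c hc => ?_).trans (List.map_id t)
      rw [Function.comp_apply, List.map_map, id]
      refine (List.map_congr_left fun x hx => ?_).trans (List.map_id c)
      rw [Function.comp_apply, id]
      exact natSuccAbove_natPredAbove fun h => hmiss (h ▸ List.mem_flatten.mpr ⟨c, hc, hx⟩)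
    refine ⟨⟨_, ?_, ?_⟩, Subtype.ext hlift⟩
    · rwa [← isSSYFT_map_iff hg hg0, hlift]
    · rwa [← contentIs_map_natSuccAbove_iff hp, hlift]

theorem YFNumber_append_zero (u w : List ℕ) : YFNumber u (w ++ [0]) = YFNumber u w := by
  have h := YFNumber_eraseIdx u (w := w ++ [0]) (p := w.length) (by simp)
  rw [List.eraseIdx_append_of_length_le le_rfl] at h
  simpa using h.symm

theorem sum_map_vMinus (u v l : List ℕ) :
    ((vMinus v).map fun w => YFNumber u (w ++ l)).sum =
      ∑ p : Fin v.length, YFNumber u (v.set p (v.getD p 0 - 1) ++ l) := by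
  rw [vMinus, List.map_map, List.sum_map_range_eq_sum_fin]
  refine Finset.sum_congr rfl fun p _ => ?_
  simp only [Function.comp_apply]
  split_ifs with h
  · have hzero := YFNumber_eraseIdx u (w := v.set p 0 ++ l) (p := p)
      (by rw [List.getD_append _ _ _ _ (by simp), List.getD_eq_getElem _ _ (by simp)]; simp)
    rw [h, Nat.sub_self, ← hzero, List.eraseIdx_append_of_lt_length (by simp), List.eraseIdx_set]
    simp
  · rfl

theorem YFNumber_one_cons_append (u v : List ℕ) {c : ℕ} (hc : c ≠ 0) :
    YFNumber (1 :: u) (v ++ [c]) = YFNumber u (v ++ [c - 1]) := by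
  have hcontent (s : List (List ℕ)) :
      ContentIs (v ++ [c]) ([v.length + 1] :: s) ↔ ContentIs (v ++ [c - 1]) s := by
    rw [contentIs_iff_of_flatten_eq_cons rfl (by simpa using hc)]
    simp
  have hcons (s : {s // IsSSYFT u s ∧ ContentIs (v ++ [c - 1]) s}) :
      IsSSYFT (1 :: u) ([v.length + 1] :: s.1) := by
    refine isSSYFT_cons_iff.mpr ⟨rfl, List.isChain_singleton _, ?_, by simp, s.2.1⟩
    intro a ha x hx
    rw [List.head?_cons, Option.mem_some_iff] at ha
    subst ha
    simpa using s.2.1.le_length_of_contentIs s.2.2 hx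
  refine (Nat.card_eq_of_bijective (fun s => ⟨_, hcons s, (hcontent s.1).mpr s.2.2⟩)
    ⟨fun s s' h => Subtype.ext (List.cons_injective (congrArg Subtype.val h)), ?_⟩).symm
  rintro ⟨t, hS, hC⟩
  obtain ⟨col, s, rfl⟩ := hS.exists_eq_cons
  obtain ⟨hlen, -, -, -, hSs⟩ := isSSYFT_cons_iff.mp hS
  obtain ⟨a, rfl⟩ := List.length_eq_one_iff.mp hlen
  obtain rfl := hS.top_eq_of_contentIs hC hc
  exact ⟨⟨s, hSs, (hcontent s).mp hC⟩, rfl⟩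

theorem YFNumber_two_cons_append (u : List ℕ) {v : List ℕ} (hv : 0 ∉ v) {c : ℕ} (hc : c ≠ 0) :
    YFNumber (2 :: u) (v ++ [c]) =
      ∑ p : Fin v.length, YFNumber u (v.set p (v.getD p 0 - 1) ++ [c - 1]) := by
  have hcontent (p : Fin v.length) (s : List (List ℕ)) :
      ContentIs (v ++ [c]) ([v.length + 1, p + 1] :: s) ↔
        ContentIs (v.set p (v.getD p 0 - 1) ++ [c - 1]) s := by
    have hvp : v.getD p 0 ≠ 0 := by
      rw [List.getD_eq_getElem v 0 p.2]
      exact ne_of_mem_of_not_mem (List.getElem_mem p.2) hv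
    rw [contentIs_iff_of_flatten_eq_cons (s := [p + 1] :: s) rfl (by simpa using hc),
      contentIs_iff_of_flatten_eq_cons rfl (by simpa [List.getD_append _ _ _ _ p.2] using hvp)]
    simp [p.2]
  have hcons (p : Fin v.length)
      (s : {s // IsSSYFT u s ∧ ContentIs (v.set p (v.getD p 0 - 1) ++ [c - 1]) s}) :
      IsSSYFT (2 :: u) ([v.length + 1, p + 1] :: s.1) := by
    refine isSSYFT_cons_iff.mpr ⟨rfl, List.isChain_pair.mpr (by omega), ?_, by simp, s.2.1⟩
    intro a ha x hx
    rw [List.head?_cons, Option.mem_some_iff] at ha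
    subst ha
    simpa using s.2.1.le_length_of_contentIs s.2.2 hx
  unfold YFNumber
  rw [← Nat.card_sigma]
  refine (Nat.card_eq_of_bijective
    (fun s => ⟨_, hcons s.1 s.2, (hcontent s.1 s.2.1).mpr s.2.2.2⟩) ⟨?_, ?_⟩).symm
  · rintro ⟨p, s, hs⟩ ⟨p', s', hs'⟩ h
    simp only [Subtype.mk.injEq, List.cons.injEq, Nat.add_right_cancel_iff, true_and,
      and_true] at h
    obtain ⟨hp, rfl⟩ := h
    obtain rfl := Fin.ext hp
    rfl
  · rintro ⟨t, hS, hC⟩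
    obtain ⟨col, s, rfl⟩ := hS.exists_eq_cons
    obtain ⟨hlen, hchain, -, hpos, hSs⟩ := isSSYFT_cons_iff.mp hS
    obtain ⟨a, b, rfl⟩ := List.length_eq_two.mp hlen
    obtain rfl := hS.top_eq_of_contentIs hC hc
    have hb : b < v.length + 1 := List.isChain_pair (R := fun a b => b < a) |>.mp hchain
    obtain ⟨p, rfl⟩ : ∃ p, b = p + 1 := ⟨b - 1, by have := hpos b (by simp); omega⟩
    exact ⟨⟨⟨p, by omega⟩, s, hSs, (hcontent ⟨p, by omega⟩ s).mp hC⟩, rfl⟩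

/-- the recurrences for the Young–Fibonacci numbers `N_{u,v}`. -/
theorem YFNumber_recurrences :
    YFNumber [] [] = 1 ∧
    YFNumber [2] [2] = 0 ∧
    (∀ u v : List ℕ, IsSnakeshape u → IsSnakeshape v → u.sum = v.sum →
      YFNumber (1 :: u) (v ++ [1]) = YFNumber u v) ∧
    (∀ u v : List ℕ, IsSnakeshape u → IsSnakeshape v → u.sum = v.sum + 1 →
      YFNumber (1 :: u) (v ++ [2]) = YFNumber u (v ++ [1])) ∧
    (∀ u v : List ℕ, IsSnakeshape u → IsSnakeshape v → u.sum + 1 = v.sum →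
      YFNumber (2 :: u) (v ++ [1]) =
        ((vMinus v).map (fun w => YFNumber u w)).sum) ∧
    (∀ u v : List ℕ, IsSnakeshape u → IsSnakeshape v → u.sum = v.sum →
      YFNumber (2 :: u) (v ++ [2]) =
        ((vMinus v).map (fun w => YFNumber u (w ++ [1]))).sum) := by
  refine ⟨YFNumber_nil_nil, ?_, fun u v _ _ _ => ?_, fun u v _ _ _ => ?_,
    fun u v _ hv _ => ?_, fun u v _ hv _ => ?_⟩
  · simpa using YFNumber_two_cons_append [] (v := []) List.not_mem_nil two_ne_zero
  · rw [YFNumber_one_cons_append u v one_ne_zero, Nat.sub_self, YFNumber_append_zero]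
  · exact YFNumber_one_cons_append u v two_ne_zero
  · rw [YFNumber_two_cons_append u (hv.zero_notMem) one_ne_zero, Nat.sub_self]
    simp_rw [YFNumber_append_zero]
    simpa using (sum_map_vMinus u v []).symm
  · rw [YFNumber_two_cons_append u (hv.zero_notMem) two_ne_zero, sum_map_vMinus]
end

section
/- If a standard Young-Fibonacci tableau t₂ of size n is obtained from a standard Young-Fibonacci tableau t₁ of size n by shifting one entry, then inv(min(t₂)) = inv(min(t₁)) + 1, where min(t) is the permutation obtained by reading the columns of t from right to left, each column from top to bottom, and inv(σ) is the number of pairs (j,i) with i < j such that j occurs before i in the word σ(1)⋯σ(n). -/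
/-!
A shift only rearranges the entries of the two columns involved, and those columns form one
contiguous block of `min(t)`. Inversions between letters in different blocks only depend on which
letters each block contains, so the count changes exactly as it does inside the block, and there the
tableau inequalities among the at most four entries involved give one new inversion.
-/

namespace List

theorem sum_range_ite_getD {α : Type*} (w : List α) (p : α → Prop) [DecidablePred p] (d : α) :
    (∑ j ∈ Finset.range w.length, if p (w.getD j d) then 1 else 0) = w.countP (p ·) := by
  induction w with
  | nil => simp
  | cons y w ih =>
    rw [length_cons, Finset.sum_range_succ', countP_cons]
    simp only [getD_cons_succ, ih]
    simp

end List

theorem invCount_eq_sum (w : List ℕ) :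
    invCount w = ∑ i ∈ Finset.range w.length, ∑ j ∈ Finset.range w.length,
      if i < j ∧ w.getD j 0 < w.getD i 0 then 1 else 0 := by
  rw [invCount, Finset.card_filter, Finset.sum_product]

@[simp]
theorem invCount_nil : invCount [] = 0 := rfl

theorem invCount_cons (x : ℕ) (w : List ℕ) :
    invCount (x :: w) = w.countP (· < x) + invCount w := by
  simp only [invCount_eq_sum, List.length_cons, Finset.sum_range_succ',
    ← w.sum_range_ite_getD (· < x) 0]
  simp [add_comm]

theorem invCount_append (u v : List ℕ) :
    invCount (u ++ v) = invCount u + invCount v + (u.map fun x => v.countP (· < x)).sum := by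
  induction u with
  | nil => simp
  | cons x u ih =>
    simp only [List.cons_append, invCount_cons, ih, List.countP_append, List.map_cons,
      List.sum_cons]
    omega

theorem invCount_append_append_add_of_perm {u v w w' : List ℕ} (hw : w.Perm w') :
    invCount (u ++ w' ++ v) + invCount w = invCount (u ++ w ++ v) + invCount w' := by
  have hcount (x : ℕ) : w.countP (· < x) = w'.countP (· < x) := hw.countP_eq _
  have hsum : (w.map fun x => v.countP (· < x)).sum = (w'.map fun x => v.countP (· < x)).sum :=
    (hw.map _).sum_eq
  simp only [invCount_append, List.map_append, List.sum_append, hcount, hsum]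
  omega

@[simp]
theorem minWord_append (t t' : List (List ℕ)) : minWord (t ++ t') = minWord t' ++ minWord t := by
  simp [minWord]

theorem invCount_minWord_append_append_of_perm {l r m m' : List (List ℕ)} {k : ℕ}
    (hm : (minWord m).Perm (minWord m'))
    (hinv : invCount (minWord m') = invCount (minWord m) + k) :
    invCount (minWord (l ++ m' ++ r)) = invCount (minWord (l ++ m ++ r)) + k := by
  have := invCount_append_append_add_of_perm (u := minWord r) (v := minWord l) hm
  simp only [minWord_append, List.append_assoc] at this ⊢
  omega

namespace IsYFT

variable {n : ℕ}

theorem bottom_lt_top {t : List (List ℕ)} (h : IsYFT n t) {b a : ℕ} (hc : [b, a] ∈ t) :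
    a < b :=
  (List.isChain_pair (R := fun a b => b < a)).mp (h.2.1 _ hc)

theorem lt_top_of_mem_next_column {l r : List (List ℕ)} {x : ℕ} {xs ys : List ℕ}
    (h : IsYFT n (l ++ [x :: xs, ys] ++ r)) {y : ℕ} (hy : y ∈ ys) : y < x := by
  refine h.2.2.1 l.length (l.length + 1) (by omega) (by simp) x ?_ y ?_ <;> simp [hy]

end IsYFT

theorem shift_increases_inversions_by_one_general (n : ℕ) (t₁ t₂ : List (List ℕ))
    (h₁ : IsYFT n t₁) (h : Shift t₁ t₂) :
    invCount (minWord t₂) = invCount (minWord t₁) + 1 := by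
  cases h <;> refine invCount_minWord_append_append_of_perm
    (by grind [minWord, List.Perm.swap, List.Perm.trans]) ?_
  case bump2 l r c b a =>
    have hab : a < b := h₁.bottom_lt_top (by simp)
    have hbc : b < c := h₁.lt_top_of_mem_next_column (by simp)
    show invCount [b, c, a] = invCount [b, a, c] + 1
    grind [invCount_cons]
  case bump1 l r c a =>
    have hac : a < c := h₁.lt_top_of_mem_next_column (by simp)
    show invCount [c, a] = invCount [a, c] + 1
    grind [invCount_cons]
  case exch l r d c b a hac hcb =>
    have hbd : b < d := h₁.lt_top_of_mem_next_column (by simp)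
    show invCount [b, c, d, a] = invCount [b, a, d, c] + 1
    grind [invCount_cons]
  case split2 l r d c b a hac hbc =>
    have hab : a < b := h₁.bottom_lt_top (by simp)
    have hcd : c < d := h₁.bottom_lt_top (by simp)
    show invCount [b, c, d, a] = invCount [b, a, d, c] + 1
    grind [invCount_cons]
  case split1 l r d c a hac =>
    have hcd : c < d := h₁.bottom_lt_top (by simp)
    show invCount [c, d, a] = invCount [a, d, c] + 1
    grind [invCount_cons]

/-- shifting one entry increases by exactly one the number of
inversions of the minimal canonical word. -/
theorem shift_increases_inversions_by_one (n : ℕ) (t₁ t₂ : List (List ℕ))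
    (h₁ : IsYFT n t₁) (h₂ : IsYFT n t₂) (h : Shift t₁ t₂) :
    invCount (minWord t₂) = invCount (minWord t₁) + 1 :=
  shift_increases_inversions_by_one_general n t₁ t₂ h₁ h
end
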